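/- Let S = [[A, B],[Bᵀ, 0]] be invertible with A ∈ ℝ^{n×n}, B ∈ ℝ^{n×M} full column rank. Suppose the augmented matrix S' = [[S, C],[Cᵀ, 0]] is also invertible, where C = [[Q],[0]] with Q ∈ ℝ^{n×K}. Let (w, v) solve S (w; v) = (g; p) and let (w', v', u') solve S' (w'; v'; u') = (g; p; q). Define Λ ∈ ℝ^{n×K} as the first n rows of S^{-1}(Q; 0), i.e., S(Λ; Γ) = (Q; 0) columnwise. If QᵀΛ is invertible, then w' = w − Λ (QᵀΛ)^{-1} (Qᵀ w − q). -/

import Mathlib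

open Matrix

/-!
Put `X = (Λ; Γ)`, so that `S X = C`. The first block row of the bordered system reads
`S (w'; v') + C u' = (g; p) = S (w; v)`, hence `S ((w'; v') + X u') = S (w; v)` and, `S` being
invertible, `w' = w - Λ u'`. The last block row reads `Qᵀ w' = q`, i.e. `QᵀΛ u' = Qᵀ w - q`,
which determines `u'`.
-/

namespace Matrix

variable {R l m m₁ m₂ n : Type*}

lemma col_fromRows (A₁ : Matrix m₁ n R) (A₂ : Matrix m₂ n R) (j : n) :
    (fromRows A₁ A₂).col j = Sum.elim (A₁.col j) (A₂.col j) := by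
  ext (i | i) <;> rfl

lemma col_mul [Fintype m] [NonUnitalNonAssocSemiring R] (A : Matrix l m R) (B : Matrix m n R)
    (j : n) : (A * B).col j = A *ᵥ B.col j :=
  rfl

lemma eq_sub_mulVec_of_mulVec_add_mulVec_eq [CommRing R] [Fintype m] [DecidableEq m] [Fintype n]
    {S : Matrix m m R} (hS : IsUnit S) {X C : Matrix m n R} (hX : S * X = C)
    {x z : m → R} {u : n → R} (h : S *ᵥ z + C *ᵥ u = S *ᵥ x) : z = x - X *ᵥ u :=
  mulVec_injective_of_isUnit hS <| by rw [mulVec_sub, mulVec_mulVec, hX, ← h, add_sub_cancel_right]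

lemma eq_nonsing_inv_mulVec_of_mulVec_eq [CommRing R] [Fintype m] [DecidableEq m]
    {A : Matrix m m R} (hA : IsUnit A) {u b : m → R} (h : A *ᵥ u = b) : u = A⁻¹ *ᵥ b := by
  have := hA.invertible
  exact (inv_mulVec_eq_vec h.symm).symm

end Matrix

theorem weight_update_formula_general (n M K : ℕ)
    (Q : Matrix (Fin n) (Fin K) ℝ)
    (S : Matrix (Fin n ⊕ Fin M) (Fin n ⊕ Fin M) ℝ)
    (C : Matrix (Fin n ⊕ Fin M) (Fin K) ℝ)
    (hC : C = Matrix.of fun i k => Sum.casesOn i (fun i' => Q i' k) (fun _ => 0))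
    (S' : Matrix ((Fin n ⊕ Fin M) ⊕ Fin K) ((Fin n ⊕ Fin M) ⊕ Fin K) ℝ)
    (hS' : S' = Matrix.fromBlocks S C C.transpose 0)
    (hSinv : IsUnit S)
    (g : Fin n → ℝ) (p : Fin M → ℝ) (q : Fin K → ℝ)
    (w : Fin n → ℝ) (v : Fin M → ℝ)
    (hwv : S.mulVec (Sum.elim w v) = Sum.elim g p)
    (w' : Fin n → ℝ) (v' : Fin M → ℝ) (u' : Fin K → ℝ)
    (hwvu : S'.mulVec (Sum.elim (Sum.elim w' v') u') = Sum.elim (Sum.elim g p) q)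
    (Λ : Matrix (Fin n) (Fin K) ℝ) (Γ : Matrix (Fin M) (Fin K) ℝ)
    (hΛ : ∀ k, S.mulVec (Sum.elim (fun i => Λ i k) (fun j => Γ j k)) =
      Sum.elim (fun i => Q i k) 0)
    (hQΛ : IsUnit (Q.transpose * Λ)) :
    w' = w - Λ.mulVec ((Q.transpose * Λ)⁻¹.mulVec (Q.transpose.mulVec w - q)) := by
  have hCQ : C = fromRows Q 0 := by
    rw [hC]
    ext (i | i) k <;> rfl
  have hX : S * fromRows Λ Γ = C := ext_col fun k => by
    rw [col_mul, col_fromRows, hCQ, col_fromRows]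
    exact hΛ k
  rw [hS', fromBlocks_mulVec, Sum.elim_eq_iff] at hwvu
  obtain ⟨htop, hbottom⟩ := hwvu
  simp only [Sum.elim_comp_inl, Sum.elim_comp_inr, zero_mulVec, add_zero] at htop hbottom
  have hsol := eq_sub_mulVec_of_mulVec_add_mulVec_eq hSinv hX (htop.trans hwv.symm)
  rw [fromRows_mulVec, ← Sum.elim_sub_sub, Sum.elim_eq_iff] at hsol
  have hw' : w' = w - Λ *ᵥ u' := hsol.1
  have hQw' : Qᵀ *ᵥ w' = q := by
    rwa [hCQ, transpose_fromRows, fromCols_mulVec_sumElim, transpose_zero, zero_mulVec,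
      add_zero] at hbottom
  have hu' : (Qᵀ * Λ) *ᵥ u' = Qᵀ *ᵥ w - q := by
    rw [← mulVec_mulVec, ← hQw', hw', mulVec_sub, sub_sub_cancel]
  rw [hw', ← eq_nonsing_inv_mulVec_of_mulVec_eq hQΛ hu']

/-- Block-matrix update formula for kernel approximation weights when the
supplemental polynomial space is enlarged: if `S (w; v) = (g; p)`,
`S' (w'; v'; u') = (g; p; q)` with `S' = [[S, C],[Cᵀ, 0]]`, `C = (Q; 0)`,
`S (Λ; Γ) = (Q; 0)` columnwise, and `QᵀΛ` is invertible, then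
`w' = w − Λ (QᵀΛ)⁻¹ (Qᵀ w − q)`. -/
theorem weight_update_formula (n M K : ℕ)
    (A : Matrix (Fin n) (Fin n) ℝ) (B : Matrix (Fin n) (Fin M) ℝ)
    (hB : Function.Injective B.mulVecLin)
    (Q : Matrix (Fin n) (Fin K) ℝ)
    (S : Matrix (Fin n ⊕ Fin M) (Fin n ⊕ Fin M) ℝ)
    (hS : S = Matrix.fromBlocks A B B.transpose 0)
    (C : Matrix (Fin n ⊕ Fin M) (Fin K) ℝ)
    (hC : C = Matrix.of fun i k => Sum.casesOn i (fun i' => Q i' k) (fun _ => 0))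
    (S' : Matrix ((Fin n ⊕ Fin M) ⊕ Fin K) ((Fin n ⊕ Fin M) ⊕ Fin K) ℝ)
    (hS' : S' = Matrix.fromBlocks S C C.transpose 0)
    (hSinv : IsUnit S) (hS'inv : IsUnit S')
    (g : Fin n → ℝ) (p : Fin M → ℝ) (q : Fin K → ℝ)
    (w : Fin n → ℝ) (v : Fin M → ℝ)
    (hwv : S.mulVec (Sum.elim w v) = Sum.elim g p)
    (w' : Fin n → ℝ) (v' : Fin M → ℝ) (u' : Fin K → ℝ)
    (hwvu : S'.mulVec (Sum.elim (Sum.elim w' v') u') = Sum.elim (Sum.elim g p) q)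
    (Λ : Matrix (Fin n) (Fin K) ℝ) (Γ : Matrix (Fin M) (Fin K) ℝ)
    (hΛ : ∀ k, S.mulVec (Sum.elim (fun i => Λ i k) (fun j => Γ j k)) =
      Sum.elim (fun i => Q i k) 0)
    (hQΛ : IsUnit (Q.transpose * Λ)) :
    w' = w - Λ.mulVec ((Q.transpose * Λ)⁻¹.mulVec (Q.transpose.mulVec w - q)) :=
  weight_update_formula_general n M K Q S C hC S' hS' hSinv g p q w v hwv w' v' u' hwvu Λ Γ hΛ hQΛ
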